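/- arXiv:2505.23263 — 3 statements merged into one kernel-verified Lean document; each statement's English description precedes it below -/
import Mathlib

section
/- Let I be an ideal on ω. For every bounded real sequence x, the set of I-cluster points of x equals the image of Ult(I) under the map F ↦ F-lim x. That is, η is an I-cluster point of x if and only if there exists a free ultrafilter F extending the dual filter of I with F-lim x = η. -/
open Filter Topology

noncomputable section

abbrev LInf : Type := lp (fun _ : ℕ => ℝ) (⊤ : ENNReal)

def indic (A : Set ℕ) : LInf :=
  ⟨A.indicator (fun _ => (1:ℝ)), memℓp_infty ⟨1, by
    rintro r ⟨n, rfl⟩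
    by_cases h : n ∈ A <;> simp [Set.indicator, h]⟩⟩

def IsIdealOmega (I : Set (Set ℕ)) : Prop :=
  (∀ A B : Set ℕ, A ∈ I → B ⊆ A → B ∈ I) ∧
  (∀ A B : Set ℕ, A ∈ I → B ∈ I → A ∪ B ∈ I) ∧
  (Set.univ : Set ℕ) ∉ I ∧
  (∀ A : Set ℕ, A.Finite → A ∈ I)

def SLI (I : Set (Set ℕ)) : Set (LInf →L[ℝ] ℝ) :=
  {f | (∀ x : LInf, (∀ n, 0 ≤ x n) → 0 ≤ f x) ∧
       (∀ (x : LInf) (a : ℝ), Tendsto (fun n => x n) atTop (𝓝 a) → f x = a) ∧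
       (∀ A ∈ I, f (indic A) = 0)}

def UltI (I : Set (Set ℕ)) : Set (Ultrafilter ℕ) :=
  {F | (↑F : Filter ℕ) ≤ cofinite ∧ ∀ A ∈ I, Aᶜ ∈ F}

def IClusterPoint (I : Set (Set ℕ)) (x : ℕ → ℝ) (η : ℝ) : Prop :=
  ∀ ε > 0, {n | |x n - η| ≤ ε} ∉ I

def IConv (I : Set (Set ℕ)) (x : ℕ → ℝ) (η : ℝ) : Prop :=
  ∀ ε > 0, {n | ε ≤ |x n - η|} ∈ I

def eone : LInf := indic Set.univ

theorem stmt2 (I : Set (Set ℕ)) (hI : IsIdealOmega I) (x : LInf) (η : ℝ) :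
    IClusterPoint I (fun n => x n) η ↔
      ∃ F ∈ UltI I, Tendsto (fun n => x n) (↑F : Filter ℕ) (𝓝 η) := by
  obtain ⟨hdown, hunion, huniv, hfin⟩ := hI
  set u : ℕ → ℝ := fun n => x n
  -- the dual filter of I
  set L : Filter ℕ :=
    { sets := {B | Bᶜ ∈ I}
      univ_sets := by simpa using hfin ∅ Set.finite_empty
      sets_of_superset := fun {A B} hA hAB => hdown _ _ hA (Set.compl_subset_compl.2 hAB)
      inter_sets := fun {A B} hA hB => by
        simpa [Set.compl_inter] using hunion _ _ hA hB } with hL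
  have hmemL : ∀ B : Set ℕ, B ∈ L ↔ Bᶜ ∈ I := fun B => Iff.rfl
  have hLcof : L ≤ cofinite := by
    intro B hB
    rw [mem_cofinite] at hB
    exact (hmemL B).2 (hfin _ hB)
  have hle_iff : ∀ F : Ultrafilter ℕ, (F ∈ UltI I ↔ (↑F : Filter ℕ) ≤ L) := by
    intro F
    constructor
    · rintro ⟨-, hF⟩ B hB
      have := hF Bᶜ ((hmemL B).1 hB)
      simpa using this
    · intro h
      exact ⟨h.trans hLcof, fun A hA => h ((hmemL Aᶜ).2 (by simpa using hA))⟩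
  -- cluster point iff MapClusterPt
  have hcl : IClusterPoint I u η ↔ MapClusterPt η L u := by
    constructor
    · intro h
      rw [mapClusterPt_iff_frequently]
      intro s hs
      obtain ⟨ε, hε, hball⟩ := Metric.mem_nhds_iff.1 hs
      rw [Filter.frequently_iff]
      intro V hV
      have hVc : Vᶜ ∈ I := (hmemL V).1 hV
      have hne : ¬ {n | |u n - η| ≤ ε / 2} ⊆ Vᶜ := fun hsub =>
        h (ε / 2) (half_pos hε) (hdown _ _ hVc hsub)
      obtain ⟨n, hn1, hn2⟩ := Set.not_subset.1 hne
      refine ⟨n, by simpa using hn2, hball ?_⟩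
      simp only [Metric.mem_ball, Real.dist_eq]
      calc |u n - η| ≤ ε / 2 := hn1
        _ < ε := half_lt_self hε
    · intro h ε hε hmem
      rw [mapClusterPt_iff_frequently] at h
      have h1 : Metric.ball η ε ∈ 𝓝 η := Metric.ball_mem_nhds _ hε
      have h2 : {n | ε ≤ |u n - η|} ∈ L := by
        rw [hmemL]
        have : {n | ε ≤ |u n - η|}ᶜ = {n | |u n - η| < ε} := by
          ext n; simp [not_le]
        rw [this]
        exact hdown _ _ hmem fun n (hn : |u n - η| < ε) => (hn.le : _)
      obtain ⟨n, hn⟩ := ((h _ h1).and_eventually (eventually_of_mem h2 (fun n hn => hn))).exists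
      rw [Metric.mem_ball, Real.dist_eq] at hn
      exact absurd hn.1 (not_lt.2 hn.2)
  rw [hcl, mapClusterPt_iff_ultrafilter]
  exact ⟨fun ⟨F, hF1, hF2⟩ => ⟨F, (hle_iff F).2 hF1, hF2⟩,
    fun ⟨F, hF1, hF2⟩ => ⟨F, (hle_iff F).1 hF1, hF2⟩⟩
end
end

section
/- Let I be an ideal on ω and A ⊆ ω with A ∉ I. Then there exists an S_I-limit f (a positive linear functional on ℓ∞ extending the limit functional and vanishing on indicator sequences of sets in I) such that f(𝟙_A) = 1. -/
open Filter Topology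

noncomputable section

lemma exists_ultra (I : Set (Set ℕ)) (hI : IsIdealOmega I) (A : Set ℕ) (hA : A ∉ I) :
    ∃ F : Ultrafilter ℕ, A ∈ F ∧ ∀ B ∈ I, Bᶜ ∈ F := by
  obtain ⟨hdown, hunion, -, hfin⟩ := hI
  have hempty : (∅ : Set ℕ) ∈ I := hfin ∅ Set.finite_empty
  let G : Filter ℕ :=
    { sets := {s | A \ s ∈ I}
      univ_sets := by simpa using hempty
      sets_of_superset := fun {s t} hs hsub =>
        hdown _ _ hs (Set.diff_subset_diff_right hsub)
      inter_sets := fun {s t} hs ht => by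
        have : A \ (s ∩ t) = (A \ s) ∪ (A \ t) := by
          ext n; simp [Set.mem_diff, and_or_left]; tauto
        simpa [Set.mem_setOf_eq, this] using hunion _ _ hs ht }
  have hGne : G.NeBot := by
    refine ⟨fun h => hA ?_⟩
    have h2 : (∅ : Set ℕ) ∈ G := h ▸ Filter.mem_bot
    have h3 : A \ (∅ : Set ℕ) ∈ I := h2
    simpa using h3
  obtain ⟨F, hF⟩ := Ultrafilter.exists_le G
  refine ⟨F, hF (by simp [G, Set.mem_setOf_eq, hempty]), fun B hB => hF ?_⟩
  show A \ Bᶜ ∈ I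
  exact hdown _ _ hB (fun n hn => not_not.mp hn.2)

set_option maxHeartbeats 1000000 in
set_option synthInstance.maxHeartbeats 200000 in
theorem stmt3 (I : Set (Set ℕ)) (hI : IsIdealOmega I) (A : Set ℕ) (hA : A ∉ I) :
    ∃ f ∈ SLI I, f (indic A) = 1 := by
  obtain ⟨F, hAF, hIF⟩ := exists_ultra I hI A hA
  obtain ⟨hdown, hunion, huniv, hfin⟩ := hI
  have hFcof : (↑F : Filter ℕ) ≤ cofinite := by
    intro s hs
    have : sᶜ ∈ I := hfin _ hs
    simpa using hIF _ this
  have hex : ∀ x : LInf, ∃ a, Tendsto (fun n => x n) ↑F (𝓝 a) ∧ |a| ≤ ‖x‖ := by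
    intro x
    have hmem : ∀ n, x n ∈ Set.Icc (-‖x‖) ‖x‖ := fun n =>
      abs_le.mp (by simpa using lp.norm_apply_le_norm ENNReal.top_ne_zero x n)
    obtain ⟨a, ha, hle⟩ := (isCompact_Icc (a := -‖x‖) (b := ‖x‖)).ultrafilter_le_nhds
      (F.map fun n => x n) (by
        rw [Ultrafilter.coe_map, Filter.le_principal_iff, Filter.mem_map]
        exact Filter.univ_mem' fun n => hmem n)
    exact ⟨a, hle, abs_le.mpr ha⟩
  set φ : LInf → ℝ := fun x => limUnder ↑F (fun n => x n) with hφ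
  have htend : ∀ x : LInf, Tendsto (fun n => x n) ↑F (𝓝 (φ x)) := fun x =>
    tendsto_nhds_limUnder ⟨_, (hex x).choose_spec.1⟩
  have heq : ∀ (x : LInf) (a : ℝ), Tendsto (fun n => x n) ↑F (𝓝 a) → φ x = a :=
    fun x a h => h.limUnder_eq
  let L : LInf →ₗ[ℝ] ℝ :=
    { toFun := φ
      map_add' := fun x y => heq _ _ (((htend x).add (htend y)).congr (fun n => by simp))
      map_smul' := fun c x => heq _ _ (((htend x).const_mul c).congr (fun n => by simp)) }
  have hbound : ∀ x : LInf, ‖L x‖ ≤ 1 * ‖x‖ := by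
    intro x
    obtain ⟨a, ha, hle⟩ := hex x
    have : L x = a := heq x a ha
    simpa [this] using hle
  refine ⟨L.mkContinuous 1 hbound, ⟨?_, ?_, ?_⟩, ?_⟩
  · intro x hx
    exact ge_of_tendsto' (htend x) hx
  · intro x a h
    exact heq x a (h.mono_left (by rwa [← Nat.cofinite_eq_atTop]))
  · intro B hB
    refine heq _ _ (Tendsto.congr' ?_ tendsto_const_nhds)
    filter_upwards [hIF B hB] with n hn
    have hn' : n ∉ B := hn
    simp [indic, Set.indicator, hn']
  · refine heq _ _ (Tendsto.congr' ?_ tendsto_const_nhds)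
    filter_upwards [hAF] with n hn
    simp [indic, Set.indicator, hn]
end
end

section
/- Let I be an ideal on ω. For every x ∈ ℓ∞ and every S_I-limit f, one has I-liminf x ≤ f(x) ≤ I-limsup x. -/
open Filter Topology

noncomputable section

lemma indic_apply (A : Set ℕ) (n : ℕ) : indic A n = A.indicator (fun _ => (1:ℝ)) n := rfl

lemma eone_apply (n : ℕ) : eone n = 1 := by simp [eone, indic_apply]

-- finite unions stay in the ideal
lemma ideal_biUnion {I : Set (Set ℕ)} (hI : IsIdealOmega I)
    {α : Type} {s : Set α} (hs : s.Finite) (g : α → Set ℕ)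
    (h : ∀ a ∈ s, g a ∈ I) : (⋃ a ∈ s, g a) ∈ I := by
  refine Set.Finite.induction_on (motive := fun s _ => (∀ a ∈ s, g a ∈ I) → (⋃ a ∈ s, g a) ∈ I)
    s hs (fun _ => by simpa using hI.2.2.2 ∅ Set.finite_empty) ?_ h
  intro a s _ _ ih h
  rw [Set.biUnion_insert]
  exact hI.2.1 _ _ (h _ (Set.mem_insert _ _))
    (ih fun b hb => h b (Set.mem_insert_of_mem _ hb))

lemma exists_cluster {I : Set (Set ℕ)} (hI : IsIdealOmega I) (x : ℕ → ℝ) (M : ℝ)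
    (hM : ∀ n, |x n| ≤ M) (C : Set ℕ) (hC : C ∉ I) :
    ∃ η, η ∈ Set.Icc (-M) M ∧ ∀ ε > 0, {n | n ∈ C ∧ |x n - η| ≤ ε} ∉ I := by
  by_contra h
  push_neg at h
  choose! ε hε hεI using h
  have hcov : Set.Icc (-M) M ⊆ ⋃ η ∈ Set.Icc (-M) M, Metric.ball η (ε η) :=
    fun η hη => Set.mem_biUnion hη (Metric.mem_ball_self (hε η hη))
  obtain ⟨t, hts, htfin, htcov⟩ :=
    isCompact_Icc.elim_finite_subcover_image (fun η _ => Metric.isOpen_ball) hcov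
  apply hC
  apply hI.1 _ _ (ideal_biUnion hI htfin (fun η => {n | n ∈ C ∧ |x n - η| ≤ ε η})
    (fun η hη => hεI η (hts hη)))
  intro n hn
  have hx : x n ∈ Set.Icc (-M) M := abs_le.mp (hM n)
  obtain ⟨η, hηt, hball⟩ := Set.mem_iUnion₂.mp (htcov hx)
  exact Set.mem_biUnion hηt ⟨hn, le_of_lt (by simpa [Real.dist_eq] using hball)⟩

lemma f_eone {I : Set (Set ℕ)} {f : LInf →L[ℝ] ℝ} (hf : f ∈ SLI I) : f eone = 1 := by
  refine hf.2.1 eone 1 ?_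
  have : (fun n => eone n) = fun _ => (1:ℝ) := funext eone_apply
  rw [this]; exact tendsto_const_nhds

lemma fx_le {I : Set (Set ℕ)} (hI : IsIdealOmega I) {f : LInf →L[ℝ] ℝ} (hf : f ∈ SLI I)
    (x : LInf) (M : ℝ) (hM : ∀ n, |x n| ≤ M) (a : ℝ)
    (hC : {n | a ≤ x n} ∈ I) : f x ≤ a := by
  set C : Set ℕ := {n | a ≤ x n}
  set c : ℝ := M + |a|
  set y : LInf := a • eone + c • indic C - x with hy
  have hyapp : ∀ n, y n = a * eone n + c * (indic C n) - x n := by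
    intro n
    rw [hy]
    simp [lp.coeFn_sub, lp.coeFn_add, lp.coeFn_smul]
    rfl
  have hpos : ∀ n, 0 ≤ y n := by
    intro n
    rw [hyapp n, eone_apply]
    by_cases hn : n ∈ C
    · have h1 : x n ≤ M := (abs_le.mp (hM n)).2
      have : indic C n = 1 := by simp [indic_apply, Set.indicator, hn]
      rw [this]
      have := abs_nonneg a
      have := neg_abs_le a
      simp only [c]
      nlinarith
    · have : indic C n = 0 := by simp [indic_apply, Set.indicator, hn]
      rw [this]
      have : x n < a := lt_of_not_ge hn
      nlinarith
  have h0 : 0 ≤ f y := hf.1 y hpos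
  have : f y = a * f eone + c * f (indic C) - f x := by
    rw [hy]; simp [map_sub, map_add, map_smul, smul_eq_mul]
  rw [this, f_eone hf, hf.2.2 C hC] at h0
  linarith

lemma upper_in_ideal {I : Set (Set ℕ)} (hI : IsIdealOmega I) (x : ℕ → ℝ) (M : ℝ)
    (hM : ∀ n, |x n| ≤ M) (b : ℝ)
    (hb : ∀ η, IClusterPoint I x η → η ≤ b) {ε : ℝ} (hε : 0 < ε) :
    {n | b + ε ≤ x n} ∈ I := by
  by_contra hC
  obtain ⟨η, _, hη⟩ := exists_cluster hI x M hM _ hC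
  have hcl : IClusterPoint I x η := by
    intro δ hδ
    intro hmem
    exact hη δ hδ (hI.1 _ _ hmem (fun n hn => hn.2))
  have h1 : η ≤ b := hb η hcl
  have h2 : b + ε ≤ η := by
    refine le_of_forall_pos_le_add ?_
    intro δ hδ
    have hne : {n | n ∈ {n | b + ε ≤ x n} ∧ |x n - η| ≤ δ}.Nonempty := by
      by_contra hne
      rw [Set.not_nonempty_iff_eq_empty] at hne
      exact hη δ hδ (hne ▸ hI.2.2.2 ∅ Set.finite_empty)
    obtain ⟨n, hn1, hn2⟩ := hne
    have := abs_le.mp hn2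
    simp only [Set.mem_setOf_eq] at hn1
    linarith [this.1]
  linarith

theorem stmt4 (I : Set (Set ℕ)) (hI : IsIdealOmega I) (x : LInf)
    (f : LInf →L[ℝ] ℝ) (hf : f ∈ SLI I) :
    sInf {η : ℝ | IClusterPoint I (fun n => x n) η} ≤ f x ∧
      f x ≤ sSup {η : ℝ | IClusterPoint I (fun n => x n) η} := by
  set K := {η : ℝ | IClusterPoint I (fun n => x n) η} with hK
  set M := ‖x‖ with hMdef
  have hM : ∀ n, |x n| ≤ M := fun n =>
    lp.norm_apply_le_norm ENNReal.top_ne_zero x n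
  -- K nonempty
  have hKne : K.Nonempty := by
    obtain ⟨η, _, hη⟩ := exists_cluster hI (fun n => x n) M hM Set.univ hI.2.2.1
    refine ⟨η, fun ε hε hmem => hη ε hε (hI.1 _ _ hmem fun n hn => hn.2)⟩
  -- K bounded
  have hKsub : K ⊆ Set.Icc (-M) M := by
    intro η hη
    rw [Set.mem_Icc, ← abs_le]
    refine le_of_forall_pos_le_add ?_
    intro ε hε
    have hne : {n | |x n - η| ≤ ε}.Nonempty := by
      by_contra hne
      rw [Set.not_nonempty_iff_eq_empty] at hne
      exact hη ε hε (hne ▸ hI.2.2.2 ∅ Set.finite_empty)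
    obtain ⟨n, hn⟩ := hne
    have h1 : |η| - |x n| ≤ |x n - η| := by
      have := abs_sub_abs_le_abs_sub η (x n)
      rw [abs_sub_comm] at this
      linarith
    simp only [Set.mem_setOf_eq] at hn
    linarith [hM n]
  have hbddA : BddAbove K := ⟨M, fun η hη => (hKsub hη).2⟩
  have hbddB : BddBelow K := ⟨-M, fun η hη => (hKsub hη).1⟩
  constructor
  · -- lower bound, apply to -x
    have hM' : ∀ n, |(-x) n| ≤ M := by
      intro n
      have : (-x : LInf) n = -(x n) := by rw [lp.coeFn_neg]; rfl
      rw [this, abs_neg]; exact hM n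
    have hup : ∀ ε : ℝ, 0 < ε → f (-x) ≤ -sInf K + ε := by
      intro ε hε
      refine fx_le hI hf (-x) M hM' _ ?_
      refine upper_in_ideal hI (fun n => (-x) n) M hM' (-sInf K) ?_ hε
      intro η hη
      have hmem : -η ∈ K := by
        intro δ hδ
        have : {n | |x n - -η| ≤ δ} = {n | |(-x) n - η| ≤ δ} := by
          ext n
          have h1 : (-x : LInf) n = -(x n) := by rw [lp.coeFn_neg]; rfl
          simp only [Set.mem_setOf_eq, h1]
          rw [show -(x n) - η = -(x n - -η) by ring, abs_neg]
        rw [this]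
        exact hη δ hδ
      have := csInf_le hbddB hmem
      linarith
    have : ∀ ε : ℝ, 0 < ε → sInf K ≤ f x + ε := by
      intro ε hε
      have := hup ε hε
      rw [map_neg] at this
      linarith
    exact le_of_forall_pos_le_add this
  · refine le_of_forall_pos_le_add ?_
    intro ε hε
    refine fx_le hI hf x M hM _ ?_
    exact upper_in_ideal hI (fun n => x n) M hM (sSup K) (fun η hη => le_csSup hbddA hη) hε
end
end
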